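/- arXiv:2108.04757 — 2 statements merged into one kernel-verified Lean document; each statement's English description precedes it below -/
import Mathlib

section
/- Let M be a finite rank-4 loopless hypermodular matroid that is non-modular, and let F and L be disjoint flats of M of rank 3 and rank 2 respectively. Then the number of rank-3 flats of M containing L is at least 3. -/
open Set Matroid
open scoped Matroid

namespace SMC

variable {α : Type*}

/-- The rank of a set `X` in a matroid `M`: the maximum cardinality of an
independent subset of `X` (intended for finite matroids). -/
noncomputable def rk (M : Matroid α) (X : Set α) : ℕ :=
  sSup {n | ∃ I, M.Indep I ∧ I ⊆ X ∧ I.ncard = n}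

/-- The rank of a matroid: the rank of its ground set. -/
noncomputable def rkM (M : Matroid α) : ℕ := rk M M.E

/-- The modular defect of a pair of sets:
`r(X) + r(Y) - r(X ∪ Y) - r(X ∩ Y)` (a natural number). -/
noncomputable def pairDefect (M : Matroid α) (X Y : Set α) : ℕ :=
  rk M X + rk M Y - rk M (X ∪ Y) - rk M (X ∩ Y)

/-- A pair of sets is a modular pair if its modular defect is zero. -/
def ModularPair (M : Matroid α) (X Y : Set α) : Prop := pairDefect M X Y = 0

/-- A matroid is modular if every pair of flats is a modular pair. -/
def Modular (M : Matroid α) : Prop :=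
  ∀ F L : Set α, M.IsFlat F → M.IsFlat L → ModularPair M F L

/-- A matroid (of rank at least 3) is hypermodular if every pair of flats of
rank `r(M) - 1` is a modular pair. -/
def Hypermodular (M : Matroid α) : Prop :=
  ∀ F L : Set α, M.IsFlat F → M.IsFlat L →
    rk M F + 1 = rkM M → rk M L + 1 = rkM M → ModularPair M F L

/-- A modular cut of `M`: a collection of flats that is upward closed and
closed under intersections of modular pairs. -/
def ModularCut (M : Matroid α) (𝓜 : Set (Set α)) : Prop :=
  (∀ F ∈ 𝓜, M.IsFlat F) ∧
  (∀ L ∈ 𝓜, ∀ F : Set α, M.IsFlat F → L ⊆ F → F ∈ 𝓜) ∧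
  (∀ F ∈ 𝓜, ∀ L ∈ 𝓜, ModularPair M F L → F ∩ L ∈ 𝓜)

/-- A principal modular cut: the collection of all flats containing some fixed flat. -/
def PrincipalCut (M : Matroid α) (𝓜 : Set (Set α)) : Prop :=
  ∃ F : Set α, M.IsFlat F ∧ 𝓜 = {L | M.IsFlat L ∧ F ⊆ L}

/-- The modular cut generated by a collection `S` of flats:
the smallest modular cut containing `S`. -/
def genCut (M : Matroid α) (S : Set (Set α)) : Set (Set α) :=
  ⋂₀ {𝓜 | ModularCut M 𝓜 ∧ S ⊆ 𝓜}

/-- A Vámos line arrangement in a rank-4 matroid: four pairwise disjoint rank-2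
flats, the union of any three of which has rank 4, with `r(T₀ ∪ T₁) = 3`,
`r(Tᵢ ∪ Lⱼ) = 3` for all `i, j`, and `r(L₀ ∪ L₁) = 4`. -/
def VamosQuad (M : Matroid α) (T₀ T₁ L₀ L₁ : Set α) : Prop :=
  M.IsFlat T₀ ∧ M.IsFlat T₁ ∧ M.IsFlat L₀ ∧ M.IsFlat L₁ ∧
  rk M T₀ = 2 ∧ rk M T₁ = 2 ∧ rk M L₀ = 2 ∧ rk M L₁ = 2 ∧
  Disjoint T₀ T₁ ∧ Disjoint T₀ L₀ ∧ Disjoint T₀ L₁ ∧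
  Disjoint T₁ L₀ ∧ Disjoint T₁ L₁ ∧ Disjoint L₀ L₁ ∧
  rk M (T₀ ∪ T₁ ∪ L₀) = 4 ∧ rk M (T₀ ∪ T₁ ∪ L₁) = 4 ∧
  rk M (T₀ ∪ L₀ ∪ L₁) = 4 ∧ rk M (T₁ ∪ L₀ ∪ L₁) = 4 ∧
  rk M (T₀ ∪ T₁) = 3 ∧
  rk M (T₀ ∪ L₀) = 3 ∧ rk M (T₀ ∪ L₁) = 3 ∧
  rk M (T₁ ∪ L₀) = 3 ∧ rk M (T₁ ∪ L₁) = 3 ∧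
  rk M (L₀ ∪ L₁) = 4

/-- The modular defect of a matroid: the sum of the modular defects of all
unordered pairs of flats (the sum over ordered pairs is twice this). -/
noncomputable def matroidDefect (M : Matroid α) : ℕ :=
  (∑ᶠ F ∈ {F | M.IsFlat F}, ∑ᶠ L ∈ {L | M.IsFlat L}, pairDefect M F L) / 2

/-!
Suppose at most two planes contain `L`. Every point `e ∉ L` spans the plane `cl (L ∪ {e})`
with `L`, and `L` does not span `M`, so there are exactly two such planes `A₁`, `A₂`; they
cover `E` and meet in `L`. By hypermodularity `F` meets each `Aᵢ` in a line missing `L`; pick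
`p ∈ L`, independent `a₁, a₂ ∈ F ∩ A₁` and `b₁, b₂ ∈ F ∩ A₂`, and the planes
`P₁ = cl {p, a₁, b₁}`, `P₂ = cl {p, a₂, b₂}`. Again by hypermodularity `P₁ ∩ P₂` is a line
through `p ∈ A₁ ∩ A₂`; since `A₁ ∪ A₂ = E`, such a line lies in `A₁` or in `A₂`, hence equals
`P₁ ∩ A₁` or `P₁ ∩ A₂`, and so `a₁ ∈ P₂` or `b₁ ∈ P₂`. But `P₂ ∩ F` is the line through `a₂` and
`b₂`, which contains neither.
-/

lemma eq_or_eq_of_ncard_lt_three {β : Type*} {s : Set β} (hs : s.Finite) (h : s.ncard < 3)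
    {a b c : β} (ha : a ∈ s) (hb : b ∈ s) (hc : c ∈ s) (hab : a ≠ b) : c = a ∨ c = b := by
  by_contra! hne
  have hle := Set.ncard_le_ncard (insert_subset hc (pair_subset ha hb)) hs
  rw [ncard_insert_of_notMem (by simpa using hne), ncard_pair hab] at hle
  omega

section Rank

variable {M : Matroid α} {X Y Z S F A A₁ A₂ g : Set α} {e p x y z : α}

lemma cast_rk_eq_eRk (hfin : M.E.Finite) (X : Set α) : (rk M X : ℕ∞) = M.eRk X := by
  obtain ⟨I, hI⟩ := M.exists_isBasis' X
  have hfinite : ∀ J, M.Indep J → J.Finite := fun J hJ => hfin.subset hJ.subset_ground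
  rw [hI.eRk_eq_encard, ← (hfinite I hI.indep).cast_ncard_eq, Nat.cast_inj]
  refine le_antisymm (csSup_le ⟨0, ∅, M.empty_indep, empty_subset X, ncard_empty α⟩ ?_) ?_
  · rintro n ⟨J, hJ, hJX, rfl⟩
    rw [← Nat.cast_le (α := ℕ∞), (hfinite J hJ).cast_ncard_eq,
      (hfinite I hI.indep).cast_ncard_eq, ← hI.eRk_eq_encard]
    exact hJ.encard_le_eRk_of_subset hJX
  · refine le_csSup ⟨M.E.ncard, ?_⟩ ⟨I, hI.indep, hI.subset, rfl⟩
    rintro n ⟨J, hJ, -, rfl⟩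
    exact ncard_le_ncard hJ.subset_ground hfin

lemma rk_empty (hfin : M.E.Finite) : rk M ∅ = 0 := by
  exact_mod_cast (cast_rk_eq_eRk hfin ∅).trans M.eRk_empty

lemma rk_mono (hfin : M.E.Finite) (h : X ⊆ Y) : rk M X ≤ rk M Y := by
  simpa only [← cast_rk_eq_eRk hfin, Nat.cast_le] using M.eRk_mono h

lemma rk_closure (hfin : M.E.Finite) (X : Set α) : rk M (M.closure X) = rk M X := by
  exact_mod_cast (cast_rk_eq_eRk hfin _).trans
    ((M.eRk_closure_eq X).trans (cast_rk_eq_eRk hfin X).symm)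

lemma rk_insert_of_notMem_closure (hfin : M.E.Finite) (he : e ∈ M.E \ M.closure X) :
    rk M (insert e X) = rk M X + 1 := by
  have h := M.eRk_insert_eq_add_one he
  rw [← cast_rk_eq_eRk hfin, ← cast_rk_eq_eRk hfin] at h
  exact_mod_cast h

lemma rk_singleton (hfin : M.E.Finite) (hl : M.closure ∅ = ∅) (he : e ∈ M.E) : rk M {e} = 1 := by
  have : M.Loopless := ⟨hl⟩
  exact_mod_cast (cast_rk_eq_eRk hfin {e}).trans (M.eRk_singleton_eq he)

lemma exists_pair_rk_eq_two (hfin : M.E.Finite) (h : 2 ≤ rk M X) :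
    ∃ x ∈ X, ∃ y ∈ X, rk M {x, y} = 2 := by
  rw [← Nat.cast_le (α := ℕ∞), cast_rk_eq_eRk hfin, le_eRk_iff] at h
  obtain ⟨I, hIX, hI, hI2⟩ := h
  obtain ⟨x, y, -, rfl⟩ := encard_eq_two.1 hI2
  refine ⟨x, hIX (by simp), y, hIX (by simp), ?_⟩
  exact_mod_cast (cast_rk_eq_eRk hfin _).trans (hI.eRk_eq_encard.trans hI2)

lemma exists_mem_ground_notMem (hfin : M.E.Finite) (h : rk M X < rkM M) :
    ∃ e ∈ M.E, e ∉ X := by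
  by_contra! hEX
  exact (rk_mono hfin hEX).not_gt h

lemma nonempty_of_rk_ne_zero (hfin : M.E.Finite) (h : rk M X ≠ 0) : X.Nonempty :=
  nonempty_iff_ne_empty.2 fun hX => h (hX ▸ rk_empty hfin)

lemma subset_closure_of_rk_le (hfin : M.E.Finite) (hXY : X ⊆ Y) (hY : Y ⊆ M.E)
    (h : rk M Y ≤ rk M X) : Y ⊆ M.closure X := by
  have hr : M.eRk Y ≤ M.eRk X := by rwa [← cast_rk_eq_eRk hfin, ← cast_rk_eq_eRk hfin, Nat.cast_le]
  have hX : M.IsRkFinite X := M.isRkFinite_of_finite (hfin.subset (hXY.trans hY))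
  have hcl := hX.closure_eq_closure_of_subset_of_eRk_ge_eRk hXY hr
  exact hcl ▸ M.subset_closure Y hY

lemma closure_subset_of_isFlat (hF : M.IsFlat F) (h : X ⊆ F) : M.closure X ⊆ F :=
  hF.closure ▸ M.closure_subset_closure h

lemma rk_insert_of_subset_isFlat (hfin : M.E.Finite) (hF : M.IsFlat F) (hXF : X ⊆ F)
    (he : e ∈ M.E) (heF : e ∉ F) : rk M (insert e X) = rk M X + 1 :=
  rk_insert_of_notMem_closure hfin ⟨he, fun h => heF (closure_subset_of_isFlat hF hXF h)⟩

lemma rk_inter_lt_of_not_subset (hfin : M.E.Finite) (hX : X ⊆ M.E) (hY : M.IsFlat Y)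
    (hXY : ¬ X ⊆ Y) : rk M (X ∩ Y) < rk M X := by
  by_contra! h
  exact hXY ((subset_closure_of_rk_le hfin inter_subset_left hX h).trans
    (closure_subset_of_isFlat hY inter_subset_right))

lemma inter_subset_of_not_subset (hfin : M.E.Finite) (hX : X ⊆ M.E) (hY : M.IsFlat Y)
    (hZ : M.IsFlat Z) (hXY : ¬ X ⊆ Y) (hS : S ⊆ X ∩ Y) (hSZ : S ⊆ Z) (h : rk M X ≤ rk M S + 1) :
    X ∩ Y ⊆ Z := by
  have := rk_inter_lt_of_not_subset hfin hX hY hXY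
  exact (subset_closure_of_rk_le hfin hS (inter_subset_left.trans hX) (by omega)).trans
    (closure_subset_of_isFlat hZ hSZ)

lemma notMem_of_not_subset (hfin : M.E.Finite) (hX : X ⊆ M.E) (hY : M.IsFlat Y)
    (hZ : M.IsFlat Z) (hXY : ¬ X ⊆ Y) (hx : x ∈ Y ∩ Z) (hy : y ∈ X ∩ Y ∩ Z) (hz : z ∈ X ∩ Y)
    (hzZ : z ∉ Z) (h : rk M X ≤ rk M {x, y} + 1) : x ∉ X := fun hxX =>
  hzZ (inter_subset_of_not_subset hfin hX hY hZ hXY (pair_subset ⟨hxX, hx.1⟩ hy.1)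
    (pair_subset hx.2 hy.2) h hz)

lemma Hypermodular.rkM_le_rk_inter_add_two (hhm : Hypermodular M) (hfin : M.E.Finite)
    (hA₁ : M.IsFlat A₁) (hA₂ : M.IsFlat A₂) (hr₁ : rk M A₁ + 1 = rkM M)
    (hr₂ : rk M A₂ + 1 = rkM M) : rkM M ≤ rk M (A₁ ∩ A₂) + 2 := by
  have hmod := hhm A₁ A₂ hA₁ hA₂ hr₁ hr₂
  have hunion : rk M (A₁ ∪ A₂) ≤ rkM M :=
    rk_mono hfin (union_subset hA₁.subset_ground hA₂.subset_ground)
  unfold ModularPair pairDefect at hmod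
  omega

lemma subset_or_subset_of_subset_union (hfin : M.E.Finite) (hg : g ⊆ M.E) (hA₁ : M.IsFlat A₁)
    (hA₂ : M.IsFlat A₂) (hcover : g ⊆ A₁ ∪ A₂) (hpg : p ∈ g) (hpA₁ : p ∈ A₁) (hpA₂ : p ∈ A₂)
    (hrg : rk M g = rk M {p} + 1) : g ⊆ A₁ ∨ g ⊆ A₂ := by
  by_contra! ⟨hgA₁, hgA₂⟩
  have hpoint : ∀ A, M.IsFlat A → p ∈ A → ¬ g ⊆ A → g ∩ A ⊆ M.closure {p} :=
    fun A hA hpA hgA => inter_subset_of_not_subset hfin hg hA (M.isFlat_closure {p}) hgA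
      (singleton_subset_iff.2 ⟨hpg, hpA⟩) (M.subset_closure {p} (by simpa using hg hpg)) hrg.le
  have hgp : g ⊆ M.closure {p} := fun x hx => (hcover hx).elim
    (fun h => hpoint A₁ hA₁ hpA₁ hgA₁ ⟨hx, h⟩) (fun h => hpoint A₂ hA₂ hpA₂ hgA₂ ⟨hx, h⟩)
  have := rk_mono hfin hgp
  rw [rk_closure hfin] at this
  omega

lemma rk_triple_eq_three (hfin : M.E.Finite) (hl : M.closure ∅ = ∅) (hF : M.IsFlat F)
    (hA : M.IsFlat A) (hpE : p ∈ M.E) (hpF : p ∉ F) (hxF : x ∈ F) (hxA : x ∉ A) (hyF : y ∈ F)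
    (hyA : y ∈ A) : rk M {p, x, y} = 3 := by
  rw [rk_insert_of_subset_isFlat hfin hF (pair_subset hxF hyF) hpE hpF,
    rk_insert_of_subset_isFlat hfin hA (singleton_subset_iff.2 hyA) (hF.subset_ground hxF) hxA,
    rk_singleton hfin hl (hA.subset_ground hyA)]

end Rank

section RankFour

variable {M : Matroid α} {F L A₁ A₂ P₁ P₂ : Set α} {p : α}

lemma inter_subset_or_inter_subset (hfin : M.E.Finite) (hrk : rkM M = 4)
    (hl : M.closure ∅ = ∅) (hhm : Hypermodular M) (hP₁ : M.IsFlat P₁) (hP₂ : M.IsFlat P₂)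
    (hrP₁ : rk M P₁ = 3) (hrP₂ : rk M P₂ = 3) (hP₁₂ : ¬ P₁ ⊆ P₂) (hA₁ : M.IsFlat A₁)
    (hA₂ : M.IsFlat A₂) (hcover : M.E ⊆ A₁ ∪ A₂) (hP₁A₁ : ¬ P₁ ⊆ A₁) (hP₁A₂ : ¬ P₁ ⊆ A₂)
    (hpP₁ : p ∈ P₁) (hpP₂ : p ∈ P₂) (hpA₁ : p ∈ A₁) (hpA₂ : p ∈ A₂) :
    P₁ ∩ A₁ ⊆ P₂ ∨ P₁ ∩ A₂ ⊆ P₂ := by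
  have hP₁E := hP₁.subset_ground
  have hlow := hhm.rkM_le_rk_inter_add_two hfin hP₁ hP₂ (by omega) (by omega)
  have hhigh := rk_inter_lt_of_not_subset hfin hP₁E hP₂ hP₁₂
  have hline : ∀ A, M.IsFlat A → ¬ P₁ ⊆ A → P₁ ∩ P₂ ⊆ A → P₁ ∩ A ⊆ P₂ :=
    fun A hA hP₁A hgA => inter_subset_of_not_subset hfin hP₁E hA hP₂ hP₁A
      (subset_inter inter_subset_left hgA) inter_subset_right (by omega)
  refine (subset_or_subset_of_subset_union hfin (inter_subset_left.trans hP₁E) hA₁ hA₂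
    ((inter_subset_left.trans hP₁E).trans hcover) ⟨hpP₁, hpP₂⟩ hpA₁ hpA₂ ?_).imp
    (hline A₁ hA₁ hP₁A₁) (hline A₂ hA₂ hP₁A₂)
  rw [rk_singleton hfin hl (hP₁E hpP₁)]
  omega

lemma not_disjoint_of_ground_subset_union (hfin : M.E.Finite) (hrk : rkM M = 4)
    (hl : M.closure ∅ = ∅) (hhm : Hypermodular M) (hA₁ : M.IsFlat A₁) (hA₂ : M.IsFlat A₂)
    (hrA₁ : rk M A₁ = 3) (hrA₂ : rk M A₂ = 3) (hA₁₂ : ¬ A₁ ⊆ A₂) (hcover : M.E ⊆ A₁ ∪ A₂)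
    (hL : M.IsFlat L) (hrL : rk M L = 2) (hLA₁ : L ⊆ A₁) (hLA₂ : L ⊆ A₂) (hF : M.IsFlat F)
    (hrF : rk M F = 3) : ¬ Disjoint F L := by
  intro hdisj
  obtain ⟨p, hpL⟩ := nonempty_of_rk_ne_zero hfin (by omega : rk M L ≠ 0)
  have hpE := hL.subset_ground hpL
  have hpF : p ∉ F := hdisj.notMem_of_mem_right hpL
  have hA₁₂L : A₁ ∩ A₂ ⊆ L := inter_subset_of_not_subset hfin hA₁.subset_ground hA₂ hL hA₁₂
    (subset_inter hLA₁ hLA₂) subset_rfl (by omega)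
  have hoff : ∀ x ∈ F, x ∈ A₁ → x ∉ A₂ :=
    fun x hxF h₁ h₂ => hdisj.notMem_of_mem_left hxF (hA₁₂L ⟨h₁, h₂⟩)
  have hline : ∀ A, M.IsFlat A → rk M A = 3 → 2 ≤ rk M (F ∩ A) := fun A hA hrA => by
    have := hhm.rkM_le_rk_inter_add_two hfin hF hA (by omega) (by omega)
    omega
  obtain ⟨a₁, ha₁, a₂, ha₂, hra⟩ := exists_pair_rk_eq_two hfin (hline A₁ hA₁ hrA₁)
  obtain ⟨b₁, hb₁, b₂, hb₂, hrb⟩ := exists_pair_rk_eq_two hfin (hline A₂ hA₂ hrA₂)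
  have hsub : ∀ a ∈ F, ∀ b ∈ F, {p, a, b} ⊆ M.closure {p, a, b} := fun a ha b hb =>
    M.subset_closure _ (insert_subset hpE (pair_subset (hF.subset_ground ha)
      (hF.subset_ground hb)))
  have hrP : ∀ a ∈ F ∩ A₁, ∀ b ∈ F ∩ A₂, rk M (M.closure {p, a, b}) = 3 := fun a ha b hb => by
    rw [rk_closure hfin,
      rk_triple_eq_three hfin hl hF hA₂ hpE hpF ha.1 (hoff a ha.1 ha.2) hb.1 hb.2]
  set P₁ := M.closure {p, a₁, b₁}
  set P₂ := M.closure {p, a₂, b₂}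
  have hP₁ := hsub a₁ ha₁.1 b₁ hb₁.1
  have hP₂ := hsub a₂ ha₂.1 b₂ hb₂.1
  have hP₂F : ¬ P₂ ⊆ F := fun h => hpF (h (hP₂ (mem_insert p _)))
  have hrP₂ : rk M P₂ = 3 := hrP a₂ ha₂ b₂ hb₂
  -- `P₂ ∩ F` is a line through `a₂` and `b₂`, so it cannot contain `a₁` or `b₁`.
  have ha₁P₂ : a₁ ∉ P₂ := notMem_of_not_subset hfin (M.closure_subset_ground _) hF hA₁ hP₂F ha₁
    ⟨⟨hP₂ (by simp), ha₂.1⟩, ha₂.2⟩ ⟨hP₂ (by simp), hb₂.1⟩ (fun h => hoff b₂ hb₂.1 h hb₂.2)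
    (by rw [hra, hrP₂])
  have hb₁P₂ : b₁ ∉ P₂ := notMem_of_not_subset hfin (M.closure_subset_ground _) hF hA₂ hP₂F hb₁
    ⟨⟨hP₂ (by simp), hb₂.1⟩, hb₂.2⟩ ⟨hP₂ (by simp), ha₂.1⟩ (hoff a₂ ha₂.1 ha₂.2)
    (by rw [hrb, hrP₂])
  rcases inter_subset_or_inter_subset hfin hrk hl hhm (M.isFlat_closure _) (M.isFlat_closure _)
    (hrP a₁ ha₁ b₁ hb₁) hrP₂ (fun h => ha₁P₂ (h (hP₁ (by simp)))) hA₁ hA₂ hcover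
    (fun h => hoff b₁ hb₁.1 (h (hP₁ (by simp))) hb₁.2)
    (fun h => hoff a₁ ha₁.1 ha₁.2 (h (hP₁ (by simp))))
    (hP₁ (mem_insert p _)) (hP₂ (mem_insert p _)) (hLA₁ hpL) (hLA₂ hpL) with h | h
  · exact ha₁P₂ (h ⟨hP₁ (by simp), ha₁.2⟩)
  · exact hb₁P₂ (h ⟨hP₁ (by simp), hb₁.2⟩)

end RankFour

theorem statement_10_general {α : Type*} (M : Matroid α) (hfin : M.E.Finite)
    (hrk : rkM M = 4) (hloopless : M.closure ∅ = ∅) (hhm : Hypermodular M)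
    (F L : Set α) (hF : M.IsFlat F) (hL : M.IsFlat L)
    (hrF : rk M F = 3) (hrL : rk M L = 2) (hdisj : Disjoint F L) :
    3 ≤ {A : Set α | M.IsFlat A ∧ rk M A = 3 ∧ L ⊆ A}.ncard := by
  set planes := {A : Set α | M.IsFlat A ∧ rk M A = 3 ∧ L ⊆ A}
  by_contra! hfew
  have hfinite : planes.Finite := hfin.finite_subsets.subset fun A hA => hA.1.subset_ground
  have hplane : ∀ e ∈ M.E, e ∉ L → M.closure (insert e L) ∈ planes := fun e he heL =>
    ⟨M.isFlat_closure _,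
      by rw [rk_closure hfin, rk_insert_of_subset_isFlat hfin hL subset_rfl he heL, hrL],
      (subset_insert e L).trans (M.subset_closure _ (insert_subset he hL.subset_ground))⟩
  have hmem : ∀ e ∈ M.E, e ∈ M.closure (insert e L) := fun e he =>
    M.mem_closure_of_mem' (mem_insert e L) he
  obtain ⟨a, haE, haL⟩ := exists_mem_ground_notMem hfin (by omega : rk M L < rkM M)
  set A₁ := M.closure (insert a L)
  obtain ⟨hA₁, hrA₁, hLA₁⟩ : A₁ ∈ planes := hplane a haE haL
  obtain ⟨e, heE, heA₁⟩ := exists_mem_ground_notMem hfin (by omega : rk M A₁ < rkM M)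
  set A₂ := M.closure (insert e L)
  have hA₂planes : A₂ ∈ planes := hplane e heE fun h => heA₁ (hLA₁ h)
  have hA₂A₁ : ¬ A₂ ⊆ A₁ := fun h => heA₁ (h (hmem e heE))
  have hcover : M.E ⊆ A₂ ∪ A₁ := by
    intro x hx
    by_cases hxL : x ∈ L
    · exact Or.inr (hLA₁ hxL)
    rcases eq_or_eq_of_ncard_lt_three hfinite hfew hA₂planes ⟨hA₁, hrA₁, hLA₁⟩
      (hplane x hx hxL) (fun h => hA₂A₁ h.subset) with h | h
    · exact Or.inl (h ▸ hmem x hx)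
    · exact Or.inr (h ▸ hmem x hx)
  exact not_disjoint_of_ground_subset_union hfin hrk hloopless hhm hA₂planes.1 hA₁
    hA₂planes.2.1 hrA₁ hA₂A₁ hcover hL hrL hA₂planes.2.2 hLA₁ hF hrF hdisj

/-- Let M be a finite rank-4 loopless hypermodular non-modular
matroid and let F and L be disjoint flats of rank 3 and 2 respectively. Then
there are at least 3 rank-3 flats of M containing L. -/
theorem statement_10 {α : Type*} (M : Matroid α) (hfin : M.E.Finite)
    (hrk : rkM M = 4) (hloopless : M.closure ∅ = ∅) (hhm : Hypermodular M)
    (hnonmod : ¬ Modular M)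
    (F L : Set α) (hF : M.IsFlat F) (hL : M.IsFlat L)
    (hrF : rk M F = 3) (hrL : rk M L = 2) (hdisj : Disjoint F L) :
    3 ≤ {A : Set α | M.IsFlat A ∧ rk M A = 3 ∧ L ⊆ A}.ncard :=
  statement_10_general M hfin hrk hloopless hhm F L hF hL hrF hrL hdisj

end SMC
end

section
/- Let M be a finite matroid and let {F, L} be a non-modular pair of flats of M such that the modular cut 𝓜 generated by {F, L} is non-principal. Let N = M +_𝓜 e be the single-element extension of M by 𝓜. Then F ∪ {e} and L ∪ {e} are flats of N, and the modular defect of the pair {F ∪ {e}, L ∪ {e}} computed in N equals the modular defect of the pair {F, L} computed in M minus 1. -/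
/-! The modular cut generated by `{F, L}` contains `F`, `L` and every flat above them, hence
`cl(F ∪ L)`, but not the flat `F ∩ L`: otherwise it would be the principal cut of `F ∩ L`.
Reading off the extension's rank function, adjoining `e` leaves the ranks of `F`, `L` and
`F ∪ L` unchanged and raises the rank of `F ∩ L` by one, so the defect drops by one. A flat
`G` of the cut stays closed after adjoining `e`, since any further `x` raises the rank of `G`
in `M`, and adjoining `e` never lowers a rank. -/

open Set Matroid
open scoped Matroid

namespace SMC

variable {α : Type*}

lemma _root_.Matroid.IsFlat.inter {M : Matroid α} {F L : Set α} (hF : M.IsFlat F)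
    (hL : M.IsFlat L) : M.IsFlat (F ∩ L) := by
  rw [inter_eq_iInter]
  exact IsFlat.iInter fun b => by cases b <;> assumption

section Rank

variable {M : Matroid α} {I X : Set α} {x : α}

lemma rk_eq_ncard_of_isBasis' (hI : M.IsBasis' I X) (hIfin : I.Finite) : rk M X = I.ncard := by
  refine IsGreatest.csSup_eq ⟨⟨I, hI.indep, hI.subset, rfl⟩, ?_⟩
  rintro n ⟨J, hJ, hJX, rfl⟩
  have hJI : J.encard ≤ I.encard := hI.encard_eq_eRk ▸ hJ.encard_le_eRk_of_subset hJX
  exact ENat.toNat_le_toNat hJI hIfin.encard_lt_top.ne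

lemma rk_eq_toNat_eRk (hfin : M.E.Finite) (X : Set α) : rk M X = (M.eRk X).toNat := by
  obtain ⟨I, hI⟩ := M.exists_isBasis' X
  rw [rk_eq_ncard_of_isBasis' hI (hfin.subset hI.indep.subset_ground), ← hI.encard_eq_eRk,
    ncard_def]

lemma eRk_ne_top_of_ground_finite (hfin : M.E.Finite) (X : Set α) : M.eRk X ≠ ⊤ :=
  ((M.eRk_le_eRank X).trans_lt
    (M.eRank_le_encard_ground.trans_lt hfin.encard_lt_top)).ne

lemma rk_insert_of_mem_closure (hfin : M.E.Finite) (hx : x ∈ M.closure X) :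
    rk M (insert x X) = rk M X := by
  rw [rk_eq_toNat_eRk hfin, rk_eq_toNat_eRk hfin, ← eRk_insert_closure_eq,
    insert_eq_of_mem hx, eRk_closure_eq]

lemma rk_insert_of_mem_diff_closure (hfin : M.E.Finite) (hx : x ∈ M.E \ M.closure X) :
    rk M (insert x X) = rk M X + 1 := by
  rw [rk_eq_toNat_eRk hfin, rk_eq_toNat_eRk hfin, eRk_insert_eq_add_one hx,
    ENat.toNat_add (eRk_ne_top_of_ground_finite hfin X) ENat.one_ne_top, ENat.toNat_one]

end Rank

section GeneratedCut

variable {M : Matroid α} {S : Set (Set α)}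

lemma subset_genCut : S ⊆ genCut M S :=
  fun _ hF _ h𝓝 => h𝓝.2 hF

lemma mem_genCut_of_subset {G G' : Set α} (hG : G ∈ genCut M S) (hG' : M.IsFlat G')
    (hGG' : G ⊆ G') : G' ∈ genCut M S :=
  fun 𝓝 h𝓝 => h𝓝.1.2.1 G (hG 𝓝 h𝓝) G' hG' hGG'

lemma genCut_subset {𝓝 : Set (Set α)} (h𝓝 : ModularCut M 𝓝) (hS : S ⊆ 𝓝) :
    genCut M S ⊆ 𝓝 :=
  sInter_subset_of_mem ⟨h𝓝, hS⟩

lemma modularCut_principal (K : Set α) : ModularCut M {G | M.IsFlat G ∧ K ⊆ G} :=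
  ⟨fun _ hG => hG.1, fun _ hG _ hF hGF => ⟨hF, hG.2.trans hGF⟩,
    fun _ hF _ hL _ => ⟨hF.1.inter hL.1, subset_inter hF.2 hL.2⟩⟩

lemma principalCut_genCut (hS : ∀ G ∈ S, M.IsFlat G) {K : Set α} (hK : M.IsFlat K)
    (hKS : ∀ G ∈ S, K ⊆ G) (hKmem : K ∈ genCut M S) : PrincipalCut M (genCut M S) :=
  ⟨K, hK, (genCut_subset (modularCut_principal K) fun G hG => ⟨hS G hG, hKS G hG⟩).antisymm
    fun _ hG => mem_genCut_of_subset hKmem hG.1 hG.2⟩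

end GeneratedCut

section Extension

structure IsExtensionByCut (M : Matroid α) (𝓜 : Set (Set α)) (e : α) (N : Matroid α) :
    Prop where
  notMem_ground : e ∉ M.E
  ground_eq : N.E = M.E ∪ {e}
  rk_eq : ∀ X ⊆ N.E,
    (e ∈ X ∧ M.closure (X \ {e}) ∉ 𝓜 → rk N X = rk M (X \ {e}) + 1) ∧
    (¬ (e ∈ X ∧ M.closure (X \ {e}) ∉ 𝓜) → rk N X = rk M (X \ {e}))

variable {M N : Matroid α} {𝓜 : Set (Set α)} {e : α}

open Classical in
lemma IsExtensionByCut.rk_union_singleton (hN : IsExtensionByCut M 𝓜 e N) {X : Set α}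
    (hX : X ⊆ M.E) :
    rk N (X ∪ {e}) = if M.closure X ∈ 𝓜 then rk M X else rk M X + 1 := by
  have hXe : X ∪ {e} ⊆ N.E := hN.ground_eq ▸ union_subset_union_left {e} hX
  have hdiff : (X ∪ {e}) \ {e} = X := by
    rw [union_singleton, insert_sdiff_self_of_notMem fun h => hN.notMem_ground (hX h)]
  obtain ⟨hnew, hold⟩ := hN.rk_eq _ hXe
  rw [hdiff] at hnew hold
  split_ifs with h
  · exact hold fun h' => h'.2 h
  · exact hnew ⟨mem_union_right X rfl, h⟩

lemma IsExtensionByCut.isFlat_union_singleton (hN : IsExtensionByCut M 𝓜 e N)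
    (hfin : M.E.Finite) {G : Set α} (hG : M.IsFlat G) (hG𝓜 : G ∈ 𝓜) : N.IsFlat (G ∪ {e}) := by
  have hGE : G ⊆ M.E := hG.subset_ground
  have hGe : G ∪ {e} ⊆ N.E := hN.ground_eq ▸ union_subset_union_left {e} hGE
  rw [isFlat_iff_closure_eq]
  refine (N.subset_closure _ hGe).antisymm' fun x hx => ?_
  by_contra hxGe
  have hxN : x ∈ M.E ∪ {e} := hN.ground_eq ▸ N.closure_subset_ground _ hx
  have hxM : x ∈ M.E \ M.closure G := by
    rw [hG.closure]
    exact ⟨hxN.resolve_right fun h => hxGe (.inr h), fun h => hxGe (.inl h)⟩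
  have hNfin : N.E.Finite := hN.ground_eq ▸ hfin.union (finite_singleton e)
  have hrk := rk_insert_of_mem_closure hNfin hx
  rw [← insert_union, hN.rk_union_singleton (insert_subset hxM.1 hGE),
    hN.rk_union_singleton hGE, rk_insert_of_mem_diff_closure hfin hxM, hG.closure,
    if_pos hG𝓜] at hrk
  split_ifs at hrk <;> omega

end Extension

theorem statement_16_general {α : Type*} (M : Matroid α) (hfin : M.E.Finite)
    (F L : Set α) (hF : M.IsFlat F) (hL : M.IsFlat L)
    (𝓜 : Set (Set α)) (h𝓜 : 𝓜 = genCut M {F, L}) (hnp : ¬ PrincipalCut M 𝓜)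
    (e : α) (he : e ∉ M.E) (N : Matroid α) (hNE : N.E = M.E ∪ {e})
    (hNr : ∀ X ⊆ N.E,
      (e ∈ X ∧ M.closure (X \ {e}) ∉ 𝓜 → rk N X = rk M (X \ {e}) + 1) ∧
      (¬ (e ∈ X ∧ M.closure (X \ {e}) ∉ 𝓜) → rk N X = rk M (X \ {e}))) :
    N.IsFlat (F ∪ {e}) ∧ N.IsFlat (L ∪ {e}) ∧
      pairDefect N (F ∪ {e}) (L ∪ {e}) = pairDefect M F L - 1 := by
  subst h𝓜
  have hF𝓜 : F ∈ genCut M {F, L} := subset_genCut (mem_insert F {L})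
  have hL𝓜 : L ∈ genCut M {F, L} := subset_genCut (mem_insert_of_mem F rfl)
  have hFL𝓜 : M.closure (F ∪ L) ∈ genCut M {F, L} :=
    mem_genCut_of_subset hF𝓜 (M.isFlat_closure _) (M.subset_closure_of_subset subset_union_left
      (union_subset hF.subset_ground hL.subset_ground))
  have hFL : F ∩ L ∉ genCut M {F, L} := fun h =>
    hnp <| principalCut_genCut (by rintro G (rfl | rfl) <;> assumption) (hF.inter hL)
      (by rintro G (rfl | rfl); exacts [inter_subset_left, inter_subset_right]) h
  have hN : IsExtensionByCut M (genCut M {F, L}) e N := ⟨he, hNE, hNr⟩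
  have hrk {X : Set α} (hX : X ⊆ M.E) := hN.rk_union_singleton hX
  refine ⟨hN.isFlat_union_singleton hfin hF hF𝓜, hN.isFlat_union_singleton hfin hL hL𝓜, ?_⟩
  rw [pairDefect, pairDefect, ← union_union_distrib_right, ← inter_union_distrib_right,
    hrk hF.subset_ground, hrk hL.subset_ground,
    hrk (union_subset hF.subset_ground hL.subset_ground),
    hrk (inter_subset_left.trans hF.subset_ground), hF.closure, hL.closure, (hF.inter hL).closure,
    if_pos hF𝓜, if_pos hL𝓜, if_pos hFL𝓜, if_neg hFL]
  omega

/-- Let M be a finite matroid and {F, L} a non-modular pair of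
flats generating a non-principal modular cut 𝓜, and let N = M +_𝓜 e be the
single-element extension of M by 𝓜 (characterized by its ground set and rank
function). Then F ∪ {e} and L ∪ {e} are flats of N, and the modular defect of
{F ∪ {e}, L ∪ {e}} in N is one less than that of {F, L} in M. -/
theorem statement_16 {α : Type*} (M : Matroid α) (hfin : M.E.Finite)
    (F L : Set α) (hF : M.IsFlat F) (hL : M.IsFlat L)
    (hpair : ¬ ModularPair M F L)
    (𝓜 : Set (Set α)) (h𝓜 : 𝓜 = genCut M {F, L}) (hnp : ¬ PrincipalCut M 𝓜)
    (e : α) (he : e ∉ M.E) (N : Matroid α) (hNE : N.E = M.E ∪ {e})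
    (hNr : ∀ X ⊆ N.E,
      (e ∈ X ∧ M.closure (X \ {e}) ∉ 𝓜 → rk N X = rk M (X \ {e}) + 1) ∧
      (¬ (e ∈ X ∧ M.closure (X \ {e}) ∉ 𝓜) → rk N X = rk M (X \ {e}))) :
    N.IsFlat (F ∪ {e}) ∧ N.IsFlat (L ∪ {e}) ∧
      pairDefect N (F ∪ {e}) (L ∪ {e}) = pairDefect M F L - 1 :=
  statement_16_general M hfin F L hF hL 𝓜 h𝓜 hnp e he N hNE hNr

end SMC
end
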